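/- For functions g_i(x) = (−x)^{-a_i} w_i(1/x) with w_i analytic at 0 and w_i(0)=1, the n×n Wronskian minor G_i of (g_0,...,ĝ_i,...,g_n) has leading behavior at x = ∞: G_i(x) = ∏_{0≤j<k≤n, j,k≠i}(a_k−a_j) · (−x)^{a_i − Σ_{m=0}^n a_m − n(n-1)/2} · u(1/x), with u analytic at 0 and u(0)=1. -/

import Mathlib

/-!
By induction on `r`, `(d/dx)^r [(-x)^(-α) w(1/x)] = (-x)^(-α-r) v_r(1/x)` near infinity, where
`v_r = derivFactor α w r` satisfies `v_{r+1}(y) = (α + r) v_r(y) + y v_r'(y)`; it is analytic at `0`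
with `v_r(0) = (α)_r w(0)` (rising factorial). Pulling the powers of `-x` out of the rows and
columns of the Wronskian minor leaves `(-x)^(a_i - Σ_m a_m - n(n-1)/2)` times
`det (v_r^{(c)}(1/x))`, and at `y = 0` this determinant is `det ((a_c)_r)`, which equals the
Vandermonde determinant `∏_{j<k} (a_k - a_j)` because `(X)_r` is monic of degree `r`. That product
is nonzero since the `a_c` are distinct, so dividing by it gives `u`.
-/

open Complex Filter Finset Matrix Bornology

noncomputable def derivFactor (α : ℂ) (w : ℂ → ℂ) : ℕ → ℂ → ℂ
  | 0 => w
  | r + 1 => fun y => (α + r) * derivFactor α w r y + y * deriv (derivFactor α w r) y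

theorem analyticOnNhd_derivFactor {w : ℂ → ℂ} {s : Set ℂ} (hs : IsOpen s)
    (hw : AnalyticOnNhd ℂ w s) (α : ℂ) (r : ℕ) :
    AnalyticOnNhd ℂ (derivFactor α w r) s := by
  induction r with
  | zero => exact hw
  | succ r ih =>
    intro y hy
    exact (analyticAt_const.mul (ih y hy)).add (analyticAt_id.mul (ih.deriv_of_isOpen hs y hy))

theorem derivFactor_apply_zero (α : ℂ) (w : ℂ → ℂ) (r : ℕ) :
    derivFactor α w r 0 = (ascPochhammer ℂ r).eval α * w 0 := by
  induction r with
  | zero => simp [derivFactor]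
  | succ r ih =>
    simp only [derivFactor, ih, ascPochhammer_succ_eval]
    ring

theorem hasDerivAt_neg_cpow_mul_comp_one_div {v : ℂ → ℂ} {β x : ℂ}
    (hv : DifferentiableAt ℂ v (1 / x)) (hx : -x ∈ slitPlane) :
    HasDerivAt (fun y => (-y) ^ (-β) * v (1 / y))
      ((-x) ^ (-β - 1) * (β * v (1 / x) + 1 / x * deriv v (1 / x))) x := by
  have hx0 : x ≠ 0 := neg_ne_zero.1 (slitPlane_ne_zero hx)
  have hpow : HasDerivAt (fun y : ℂ => (-y) ^ (-β)) (-β * (-x) ^ (-β - 1) * -1) x :=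
    (hasDerivAt_neg x).cpow_const hx
  have hinv : HasDerivAt (fun y : ℂ => v (1 / y)) (deriv v (1 / x) * -(x ^ 2)⁻¹) x := by
    simp only [one_div] at hv ⊢
    exact hv.hasDerivAt.comp x (hasDerivAt_inv hx0)
  refine (hpow.mul hinv).congr_deriv ?_
  have hsplit : (-x) ^ (-β) = (-x) ^ (-β - 1) * -x := by
    rw [cpow_sub _ _ (slitPlane_ne_zero hx), cpow_one, div_mul_cancel₀ _ (slitPlane_ne_zero hx)]
  rw [hsplit]
  field_simp

theorem iteratedDeriv_neg_cpow_mul_comp_one_div {w : ℂ → ℂ} {s : Set ℂ} (hs : IsOpen s)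
    (hw : AnalyticOnNhd ℂ w s) (α : ℂ) (r : ℕ) {x : ℂ} (hxs : 1 / x ∈ s)
    (hx : -x ∈ slitPlane) :
    iteratedDeriv r (fun x => (-x) ^ (-α) * w (1 / x)) x
      = (-x) ^ (-α - r) * derivFactor α w r (1 / x) := by
  induction r generalizing x with
  | zero => simp [derivFactor]
  | succ r ih =>
    have hU : IsOpen ({y : ℂ | -y ∈ slitPlane} ∩ (fun y => 1 / y) ⁻¹' s) :=
      (continuousOn_const.div continuousOn_id fun y hy =>
        neg_ne_zero.1 (slitPlane_ne_zero hy)).isOpen_inter_preimage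
        (isOpen_slitPlane.preimage continuous_neg) hs
    have heq : iteratedDeriv r (fun x => (-x) ^ (-α) * w (1 / x))
        =ᶠ[nhds x] fun y => (-y) ^ (-α - r) * derivFactor α w r (1 / y) :=
      eventually_of_mem (hU.mem_nhds ⟨hx, hxs⟩) fun y hy => ih hy.2 hy.1
    rw [iteratedDeriv_succ, heq.deriv_eq, show -α - ((r + 1 : ℕ) : ℂ) = -(α + r) - 1 by
      push_cast; ring]
    convert (hasDerivAt_neg_cpow_mul_comp_one_div
      (analyticOnNhd_derivFactor hs hw α r _ hxs).differentiableAt hx).deriv using 2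
    · simp only [neg_add']
    · simp [derivFactor]

theorem analyticAt_det {𝕜 E A ι : Type*} [NontriviallyNormedField 𝕜] [NormedAddCommGroup E]
    [NormedSpace 𝕜 E] [NormedCommRing A] [NormedAlgebra 𝕜 A] [Fintype ι] [DecidableEq ι]
    {M : E → Matrix ι ι A} {z : E} (hM : ∀ i j, AnalyticAt 𝕜 (fun y => M y i j) z) :
    AnalyticAt 𝕜 (fun y => (M y).det) z := by
  simp only [det_apply']
  exact Finset.analyticAt_fun_sum _ fun σ _ =>
    analyticAt_const.mul (Finset.analyticAt_fun_prod _ fun i _ => hM _ _)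

theorem sum_fin_val_eq (n : ℕ) : ∑ r : Fin n, ((r : ℕ) : ℂ) = n * (n - 1) / 2 := by
  induction n with
  | zero => simp
  | succ n ih =>
    rw [Fin.sum_univ_castSucc]
    simp only [Fin.val_castSucc, Fin.val_last, ih]
    push_cast
    ring

theorem cpow_sum {ι : Type*} (s : Finset ι) (f : ι → ℂ) {z : ℂ} (hz : z ≠ 0) :
    z ^ (∑ j ∈ s, f j) = ∏ j ∈ s, z ^ f j := by
  classical
  induction s using Finset.induction with
  | empty => simp
  | insert _ _ h ih => rw [sum_insert h, prod_insert h, cpow_add _ _ hz, ih]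

theorem det_of_cpow_mul {n : ℕ} {z : ℂ} (hz : z ≠ 0) (b : Fin n → ℂ)
    (V : Matrix (Fin n) (Fin n) ℂ) :
    (of fun r c : Fin n => z ^ (-b c - r) * V r c).det
      = z ^ (-(∑ c, b c) - n * (n - 1) / 2) * V.det := by
  have hsplit : (of fun r c : Fin n => z ^ (-b c - r) * V r c)
      = of fun r c => z ^ (-b c) * (of fun r c : Fin n => z ^ (-(r : ℂ)) * V r c) r c := by
    ext r c
    rw [of_apply, of_apply, of_apply, sub_eq_add_neg, cpow_add _ _ hz, mul_assoc]
  rw [hsplit, det_mul_row, det_mul_column, ← cpow_sum _ _ hz, ← cpow_sum _ _ hz,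
    ← mul_assoc, ← cpow_add _ _ hz, sum_neg_distrib, sum_neg_distrib, sum_fin_val_eq,
    ← sub_eq_add_neg]

theorem det_derivFactor_apply_zero {n : ℕ} (b : Fin n → ℂ) (w : Fin n → ℂ → ℂ)
    (hw : ∀ c, w c 0 = 1) :
    (of fun r c : Fin n => derivFactor (b c) (w c) r 0).det = (vandermonde b).det := by
  rw [det_eval_matrixOfPolynomials_eq_det_vandermonde b (fun r => ascPochhammer ℂ r)
    (fun r => ascPochhammer_natDegree ℂ r) (fun r => monic_ascPochhammer ℂ r), ← det_transpose]
  congr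
  ext r c
  simp [derivFactor_apply_zero, hw]

theorem eventually_iteratedDeriv_neg_cpow_mul_comp_one_div {w : ℂ → ℂ} (hw : AnalyticAt ℂ w 0)
    (α : ℂ) (r : ℕ) :
    ∀ᶠ x in cobounded ℂ, -x ∈ slitPlane →
      iteratedDeriv r (fun x => (-x) ^ (-α) * w (1 / x)) x
        = (-x) ^ (-α - r) * derivFactor α w r (1 / x) := by
  have hs := isOpen_analyticAt ℂ w
  filter_upwards [tendsto_inv₀_cobounded.eventually (hs.mem_nhds hw)] with x hx
  exact iteratedDeriv_neg_cpow_mul_comp_one_div hs (fun _ h => h) α r (by rwa [one_div])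

/-- For g_i(x) = (−x)^{-a_i} w_i(1/x) with w_i analytic at 0 and
w_i(0) = 1, and a₀,…,aₙ pairwise non-congruent mod ℤ, the n×n Wronskian minor G_i of
(g₀,…,ĝ_i,…,gₙ) has leading behavior at x = ∞:
G_i(x) = ∏_{0≤j<k≤n, j,k≠i}(a_k − a_j) · (−x)^{a_i − Σ_{m=0}^n a_m − n(n-1)/2} · u(1/x),
with u analytic at 0 and u(0) = 1. -/
theorem wronskian_minor_leading_behavior_at_infinity (n : ℕ) (a : Fin (n + 1) → ℂ)
    (ha : ∀ j k, j ≠ k → ∀ z : ℤ, a j - a k ≠ (z : ℂ))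
    (w : Fin (n + 1) → ℂ → ℂ) (hw : ∀ i, AnalyticAt ℂ (w i) 0)
    (hw1 : ∀ i, w i 0 = 1)
    (g : Fin (n + 1) → ℂ → ℂ)
    (hg : ∀ i, ∀ x : ℂ, g i x = (-x) ^ (-(a i)) * w i (1 / x))
    (i : Fin (n + 1)) :
    ∃ u : ℂ → ℂ, AnalyticAt ℂ u 0 ∧ u 0 = 1 ∧ ∃ R > (0 : ℝ), ∀ x : ℂ,
      R < ‖x‖ → (0 < (-x).re ∨ (-x).im ≠ 0) →
      Matrix.det (Matrix.of fun r c : Fin n =>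
          iteratedDeriv (r : ℕ) (g (i.succAbove c)) x) =
        (∏ j : Fin n, ∏ k ∈ Finset.Ioi j, (a (i.succAbove k) - a (i.succAbove j))) *
          (-x) ^ (a i - (∑ m : Fin (n + 1), a m) - (n : ℂ) * ((n : ℂ) - 1) / 2) *
          u (1 / x) := by
  set b : Fin n → ℂ := fun c => a (i.succAbove c)
  set W : ℂ → Matrix (Fin n) (Fin n) ℂ :=
    fun y => of fun r c => derivFactor (b c) (w (i.succAbove c)) r y
  have hC : (vandermonde b).det ≠ 0 := det_vandermonde_ne_zero_iff.2 fun j k hjk =>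
    Fin.succAbove_right_injective (of_not_not fun hne => ha _ _ hne 0 (by simpa [sub_eq_zero]))
  refine ⟨fun y => ((vandermonde b).det)⁻¹ * (W y).det,
    analyticAt_const.mul (analyticAt_det fun r c => analyticOnNhd_derivFactor
      (isOpen_analyticAt ℂ _) (fun _ h => h) _ r 0 (hw _)),
    by simp only [W, det_derivFactor_apply_zero b _ fun c => hw1 _, inv_mul_cancel₀ hC], ?_⟩
  have hev : ∀ᶠ x in cobounded ℂ, ∀ r c : Fin n, -x ∈ slitPlane →
      iteratedDeriv r (g (i.succAbove c)) x = (-x) ^ (-b c - r) * W (1 / x) r c :=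
    eventually_all.2 fun r => eventually_all.2 fun c => by
      rw [show g (i.succAbove c) = _ from funext (hg _)]
      exact eventually_iteratedDeriv_neg_cpow_mul_comp_one_div (hw (i.succAbove c)) (b c) r
  obtain ⟨R, -, hR⟩ := atTop_basis_Ioi.cobounded_of_norm.eventually_iff.1 hev
  refine ⟨max R 1, by positivity, fun x hx hxs => ?_⟩
  have hdet : (of fun r c : Fin n => iteratedDeriv r (g (i.succAbove c)) x).det
      = (-x) ^ (-(∑ c, b c) - n * (n - 1) / 2) * (W (1 / x)).det := by
    rw [← det_of_cpow_mul (slitPlane_ne_zero hxs)]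
    congr
    ext r c
    exact hR (lt_of_le_of_lt (le_max_left _ _) hx) r c hxs
  have hV : ∏ j : Fin n, ∏ k ∈ Ioi j, (a (i.succAbove k) - a (i.succAbove j))
      = (vandermonde b).det := (det_vandermonde b).symm
  have hexp : a i - ∑ m, a m - n * (n - 1) / 2 = -(∑ c, b c) - n * (n - 1) / 2 := by
    rw [Fin.sum_univ_succAbove a i]
    ring
  rw [hdet, hV, hexp]
  field_simp
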